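/- arXiv:2008.13302 — 2 statements merged into one kernel-verified Lean document; each statement's English description precedes it below -/
import Mathlib

section
/- For every integer k ≥ 1, there exists a finite connected simple graph G with metric dimension exactly k, order |V(G)| = 3^k + k, and edge metric dimension edim(G) ≥ 3^k − 1 − 2^k. In particular, for each k there exist graphs with metric dimension k, edge metric dimension 3^k(1 − o(1)), and order 3^k(1 + o(1)). -/
/-!
Take the king's graph on `{0,1,2}^k` and add `k` apices, apex `i` adjacent to the grid points
with `i`-th coordinate `0`. A grid point `x` is at distance `x i + 1` from apex `i`, so the apices
resolve the graph. Conversely every vertex sees the `3^k` grid points at only three consecutive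
distances, so a resolving set `S` needs `3^|S| ≥ 3^k`.

The centre `c = (1,…,1)` is adjacent to every other grid point. If `x, y ≠ c` have the same zero
coordinates, the spokes `xc` and `yc` are at the same distance from every vertex other than `x`
and `y`, so an edge resolving set contains all but at most one point of each of the `2^k`
zero-pattern classes of the `3^k - 1` non-central grid points.
-/

open SimpleGraph

/-- `S` is a resolving set for `G`: any two distinct vertices are distinguished
by their graph distance to some landmark in `S`. -/
def IsResolvingSet {V : Type*} (G : SimpleGraph V) (S : Set V) : Prop :=
  ∀ u v : V, u ≠ v → ∃ w ∈ S, G.dist u w ≠ G.dist v w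

/-- The metric dimension of `G`: the least size of a (finite) resolving set. -/
noncomputable def metricDim {V : Type*} (G : SimpleGraph V) : ℕ :=
  sInf {k | ∃ S : Finset V, IsResolvingSet G ↑S ∧ S.card = k}

/-- Distance from an edge `e = {u,v}` to a vertex `w`: `min (d(u,w)) (d(v,w))`. -/
noncomputable def edgeDist {V : Type*} (G : SimpleGraph V) (e : Sym2 V) (w : V) : ℕ :=
  Sym2.lift ⟨fun u v => min (G.dist u w) (G.dist v w), fun u v => by simp [min_comm]⟩ e

/-- `S` is an edge resolving set for `G`: any two distinct edges are distinguished
by their distance to some landmark in `S`. -/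
def IsEdgeResolvingSet {V : Type*} (G : SimpleGraph V) (S : Set V) : Prop :=
  ∀ e ∈ G.edgeSet, ∀ f ∈ G.edgeSet, e ≠ f → ∃ w ∈ S, edgeDist G e w ≠ edgeDist G f w

/-- The edge metric dimension of `G`: the least size of a (finite) edge resolving set. -/
noncomputable def edgeMetricDim {V : Type*} (G : SimpleGraph V) : ℕ :=
  sInf {k | ∃ S : Finset V, IsEdgeResolvingSet G ↑S ∧ S.card = k}

/-- `G` contains `H` as a subgraph: there is an injective graph homomorphism `H → G`. -/
def Contains {V W : Type*} (G : SimpleGraph V) (H : SimpleGraph W) : Prop :=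
  ∃ f : H →g G, Function.Injective f

/-- The graph `D_k` on `ℤ_{≥0}^k`: distinct points are adjacent iff they differ
by at most 1 in every coordinate. -/
def Dgraph (k : ℕ) : SimpleGraph (Fin k → ℕ) where
  Adj x y := x ≠ y ∧ ∀ i, x i ≤ y i + 1 ∧ y i ≤ x i + 1
  symm := ⟨fun _x _y h => ⟨h.1.symm, fun i => ⟨(h.2 i).2, (h.2 i).1⟩⟩⟩
  loopless := ⟨fun _x h => h.1 rfl⟩

open Finset

section General

variable {V : Type*} {G : SimpleGraph V}

theorem SimpleGraph.Walk.le_add_length {f : V → ℕ} (hf : ∀ u v, G.Adj u v → f u ≤ f v + 1)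
    {u v : V} (p : G.Walk u v) : f u ≤ f v + p.length := by
  induction p with
  | nil => simp
  | cons h _ ih => have := hf _ _ h; rw [Walk.length_cons]; omega

theorem SimpleGraph.Reachable.le_add_dist {f : V → ℕ} (hf : ∀ u v, G.Adj u v → f u ≤ f v + 1)
    {u v : V} (h : G.Reachable u v) : f u ≤ f v + G.dist u v := by
  obtain ⟨p, hp⟩ := h.exists_walk_length_eq_dist
  exact hp ▸ p.le_add_length hf

theorem SimpleGraph.Connected.dist_ne_dist_self (hG : G.Connected) {u v : V} (h : u ≠ v) :
    G.dist u v ≠ G.dist v v := by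
  rw [dist_self]
  exact hG.dist_eq_zero_iff.not.2 h

theorem edgeDist_mk (u v w : V) : edgeDist G s(u, v) w = min (G.dist u w) (G.dist v w) := rfl

theorem SimpleGraph.Connected.edgeDist_eq_zero_iff (hG : G.Connected) {e : Sym2 V} {w : V} :
    edgeDist G e w = 0 ↔ w ∈ e := by
  induction e using Sym2.ind with
  | _ u v =>
    rw [edgeDist_mk, Nat.min_eq_zero_iff, hG.dist_eq_zero_iff, hG.dist_eq_zero_iff, Sym2.mem_iff,
      eq_comm, @eq_comm _ v]

theorem SimpleGraph.Connected.isEdgeResolvingSet_univ (hG : G.Connected) :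
    IsEdgeResolvingSet G Set.univ := by
  intro e he f _ hne
  induction e using Sym2.ind with
  | _ a b =>
    obtain ⟨w, hwe, hwf⟩ : ∃ w ∈ s(a, b), w ∉ f := by
      by_contra! h
      exact hne ((Sym2.mem_and_mem_iff (G.ne_of_adj he)).1
        ⟨h a (Sym2.mem_mk_left a b), h b (Sym2.mem_mk_right a b)⟩).symm
    refine ⟨w, trivial, ?_⟩
    rw [hG.edgeDist_eq_zero_iff.2 hwe, ne_comm, Ne, hG.edgeDist_eq_zero_iff]
    exact hwf

theorem metricDim_eq_card {S : Finset V} (hS : IsResolvingSet G S)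
    (hmin : ∀ T : Finset V, IsResolvingSet G T → S.card ≤ T.card) : metricDim G = S.card :=
  le_antisymm (Nat.sInf_le ⟨S, hS, rfl⟩)
    (le_csInf ⟨_, S, hS, rfl⟩ fun _ ⟨T, hT, hcard⟩ => hcard ▸ hmin T hT)

theorem le_edgeMetricDim {n : ℕ} {S₀ : Finset V} (h₀ : IsEdgeResolvingSet G S₀)
    (h : ∀ S : Finset V, IsEdgeResolvingSet G S → n ≤ S.card) : n ≤ edgeMetricDim G :=
  le_csInf ⟨_, S₀, h₀, rfl⟩ fun _ ⟨S, hS, hcard⟩ => hcard ▸ h S hS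

theorem IsResolvingSet.card_le_pow_card {S : Finset V} (hS : IsResolvingSet G S) (A : Finset V)
    (b : V → ℕ) (m : ℕ) (hA : ∀ x ∈ A, ∀ w ∈ S, b w ≤ G.dist x w ∧ G.dist x w < b w + m) :
    A.card ≤ m ^ S.card := by
  classical
  let F : V → S → ℕ := fun x w => G.dist x w - b w
  have hmaps : Set.MapsTo F A ↑(Fintype.piFinset fun _ : S => range m) := fun x hx => by
    simp only [Fintype.coe_piFinset, Set.mem_pi, Set.mem_univ, coe_range, Set.mem_Iio, forall_const]
    intro w
    have := hA x hx w w.2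
    show G.dist x w - b w < m
    omega
  have hinj : Set.InjOn F A := by
    intro x hx y hy hxy
    by_contra hne
    obtain ⟨w, hwS, hw⟩ := hS x y hne
    have h := congrFun hxy ⟨w, hwS⟩
    have := hA x hx w hwS
    have := hA y hy w hwS
    simp only [F] at h
    omega
  simpa using card_le_card_of_injOn F hmaps hinj

theorem Finset.card_le_card_filter_add_card {α β : Type*} [Fintype β] (A : Finset α) (g : α → β)
    (P : α → Prop) [DecidablePred P] (h : ∀ x ∈ A, ∀ y ∈ A, x ≠ y → g x = g y → P x ∨ P y) :
    A.card ≤ (A.filter P).card + Fintype.card β := by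
  rw [← card_filter_add_card_filter_not P, ← card_univ]
  refine Nat.add_le_add_left (card_le_card_of_injOn g (fun _ _ => mem_univ _) ?_) _
  intro x hx y hy hxy
  by_contra hne
  simp only [coe_filter, Set.mem_ofPred_eq] at hx hy
  exact (h x hx.1 y hy.1 hne hxy).elim hx.2 hy.2

end General

abbrev ApexGridVertex (k : ℕ) := (Fin k → Fin 3) ⊕ Fin k

def apexGrid (k : ℕ) : SimpleGraph (ApexGridVertex k) where
  Adj u v :=
    match u, v with
    | .inl x, .inl y => x ≠ y ∧ ∀ i, (x i : ℕ) ≤ y i + 1 ∧ (y i : ℕ) ≤ x i + 1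
    | .inl x, .inr i => x i = 0
    | .inr i, .inl x => x i = 0
    | .inr _, .inr _ => False
  symm := by
    refine ⟨?_⟩
    rintro (x | i) (y | j) h
    exacts [⟨h.1.symm, fun i => (h.2 i).symm⟩, h, h, h]
  loopless := by
    refine ⟨?_⟩
    rintro (x | i) h
    exacts [h.1 rfl, h]

def gridCenter (k : ℕ) : Fin k → Fin 3 := fun _ => 1

section ApexGrid

variable {k : ℕ}

@[simp]
theorem apexGrid_adj_inl_inr {x : Fin k → Fin 3} {i : Fin k} :
    (apexGrid k).Adj (.inl x) (.inr i) ↔ x i = 0 :=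
  Iff.rfl

theorem apexGrid_adj_gridCenter {x : Fin k → Fin 3} (hx : x ≠ gridCenter k) :
    (apexGrid k).Adj (.inl x) (.inl (gridCenter k)) :=
  ⟨hx, fun i => by simp only [gridCenter]; omega⟩

theorem apexGrid_connected : (apexGrid k).Connected := by
  refine (connected_iff_exists_forall_reachable _).2 ⟨.inl (gridCenter k), ?_⟩
  have grid : ∀ x, (apexGrid k).Reachable (.inl (gridCenter k)) (.inl x) := fun x => by
    rcases eq_or_ne x (gridCenter k) with rfl | hx
    exacts [Reachable.refl _, (apexGrid_adj_gridCenter hx).symm.reachable]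
  rintro (x | i)
  · exact grid x
  · exact (grid fun _ => 0).trans (Adj.reachable (by simp))

theorem apexGrid_dist_inl_inr_le (x : Fin k → Fin 3) (i : Fin k) :
    (apexGrid k).dist (.inl x) (.inr i) ≤ x i + 1 := by
  suffices ∀ n, ∀ x : Fin k → Fin 3, (x i : ℕ) = n → (apexGrid k).dist (.inl x) (.inr i) ≤ n + 1 from
    this _ x rfl
  intro n
  induction n with
  | zero => exact fun x hx => (dist_eq_one_iff_adj.2 (Fin.ext hx)).le
  | succ n ih =>
    intro x hx
    let y := Function.update x i ⟨n, by omega⟩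
    have hxy : (apexGrid k).Adj (.inl x) (.inl y) := by
      refine ⟨fun h => ?_, fun j => ?_⟩
      · have := congrArg Fin.val (congrFun h i)
        simp [y] at this
        omega
      · rcases eq_or_ne j i with rfl | hj
        · simp [y]; omega
        · simp [y, Function.update_of_ne hj]
    calc (apexGrid k).dist (.inl x) (.inr i)
        ≤ (apexGrid k).dist (.inl x) (.inl y) + (apexGrid k).dist (.inl y) (.inr i) :=
          apexGrid_connected.dist_triangle
      _ ≤ 1 + (n + 1) := by
          rw [dist_eq_one_iff_adj.2 hxy]
          exact Nat.add_le_add_left (ih y (by simp [y])) 1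
      _ = n + 1 + 1 := by ring

theorem apexGrid_dist_inl_inr (x : Fin k → Fin 3) (i : Fin k) :
    (apexGrid k).dist (.inl x) (.inr i) = x i + 1 := by
  refine le_antisymm (apexGrid_dist_inl_inr_le x i) ?_
  let f : ApexGridVertex k → ℕ := Sum.elim (fun z => z i + 1) (fun j => if j = i then 0 else 2)
  have hf : ∀ u v, (apexGrid k).Adj u v → f u ≤ f v + 1 := by
    rintro (z | j) (w | l) h
    · exact Nat.add_le_add_right (h.2 i).1 1
    · have : z l = 0 := h
      simp only [f, Sum.elim_inl, Sum.elim_inr]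
      split_ifs with hl
      · subst hl; simp [this]
      · omega
    · simp only [f, Sum.elim_inl, Sum.elim_inr]
      split_ifs <;> omega
    · exact h.elim
  simpa [f] using (apexGrid_connected (.inl x) (.inr i)).le_add_dist hf

theorem apexGrid_dist_inl_inl_le_two (x y : Fin k → Fin 3) :
    (apexGrid k).dist (.inl x) (.inl y) ≤ 2 := by
  have hc : ∀ z, (apexGrid k).dist (.inl z) (.inl (gridCenter k)) ≤ 1 := fun z => by
    rcases eq_or_ne z (gridCenter k) with rfl | hz
    exacts [by simp, (dist_eq_one_iff_adj.2 (apexGrid_adj_gridCenter hz)).le]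
  calc (apexGrid k).dist (.inl x) (.inl y)
      ≤ (apexGrid k).dist (.inl x) (.inl (gridCenter k)) +
          (apexGrid k).dist (.inl (gridCenter k)) (.inl y) := apexGrid_connected.dist_triangle
    _ ≤ 2 := by
      have := hc y
      rw [dist_comm] at this
      linarith [hc x]

theorem apexGrid_isResolvingSet_range_inr :
    IsResolvingSet (apexGrid k) (Set.range .inr) := by
  rintro (x | i) (y | j) huv
  · obtain ⟨i, hi⟩ := Function.ne_iff.1 fun h => huv (congrArg _ h)
    refine ⟨.inr i, ⟨i, rfl⟩, ?_⟩
    rw [apexGrid_dist_inl_inr, apexGrid_dist_inl_inr]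
    exact fun h => hi (Fin.ext (by omega))
  · exact ⟨.inr j, ⟨j, rfl⟩, apexGrid_connected.dist_ne_dist_self huv⟩
  · exact ⟨.inr i, ⟨i, rfl⟩, (apexGrid_connected.dist_ne_dist_self huv.symm).symm⟩
  · exact ⟨.inr j, ⟨j, rfl⟩, apexGrid_connected.dist_ne_dist_self huv⟩

theorem apexGrid_le_card_of_isResolvingSet {S : Finset (ApexGridVertex k)}
    (hS : IsResolvingSet (apexGrid k) S) : k ≤ S.card := by
  have h := hS.card_le_pow_card (univ.map .inl) (Sum.elim 0 1) 3 <| by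
    simp only [mem_map, mem_univ, true_and, Function.Embedding.inl_apply]
    rintro _ ⟨x, rfl⟩ (z | i) _
    · have := apexGrid_dist_inl_inl_le_two x z
      simp only [Sum.elim_inl, Pi.zero_apply]
      omega
    · have := (x i).isLt
      simp only [apexGrid_dist_inl_inr, Sum.elim_inr, Pi.one_apply]
      omega
  simpa [Nat.pow_le_pow_iff_right] using h

theorem apexGrid_metricDim : metricDim (apexGrid k) = k := by
  have hS : IsResolvingSet (apexGrid k) ↑(univ.map (.inr : Fin k ↪ ApexGridVertex k)) := by
    simpa using apexGrid_isResolvingSet_range_inr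
  simpa using metricDim_eq_card hS fun T hT => by
    simpa using apexGrid_le_card_of_isResolvingSet hT

theorem apexGrid_edgeDist_spoke_inl {x z : Fin k → Fin 3} (hzx : z ≠ x) :
    edgeDist (apexGrid k) s(.inl x, .inl (gridCenter k)) (.inl z) =
      if z = gridCenter k then 0 else 1 := by
  rw [edgeDist_mk]
  split_ifs with hz
  · simp [hz]
  · have h₁ := apexGrid_connected.dist_ne_dist_self (Sum.inl_injective.ne hzx.symm)
    rw [dist_self] at h₁
    rw [dist_eq_one_iff_adj.2 (apexGrid_adj_gridCenter hz).symm]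
    omega

theorem apexGrid_edgeDist_spoke_inr (x : Fin k → Fin 3) (i : Fin k) :
    edgeDist (apexGrid k) s(.inl x, .inl (gridCenter k)) (.inr i) = if x i = 0 then 1 else 2 := by
  rw [edgeDist_mk, apexGrid_dist_inl_inr, apexGrid_dist_inl_inr]
  simp only [gridCenter, Fin.isValue, Fin.val_one]
  split_ifs with h
  · simp [h]
  · have : (x i : ℕ) ≠ 0 := fun h' => h (Fin.ext h')
    omega

theorem apexGrid_edgeDist_spoke_eq {x y : Fin k → Fin 3}
    (hxy : univ.filter (x · = 0) = univ.filter (y · = 0)) {w : ApexGridVertex k}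
    (hwx : w ≠ .inl x) (hwy : w ≠ .inl y) :
    edgeDist (apexGrid k) s(.inl x, .inl (gridCenter k)) w =
      edgeDist (apexGrid k) s(.inl y, .inl (gridCenter k)) w := by
  rcases w with z | i
  · rw [apexGrid_edgeDist_spoke_inl (fun h => hwx (congrArg _ h)),
      apexGrid_edgeDist_spoke_inl (fun h => hwy (congrArg _ h))]
  · have : x i = 0 ↔ y i = 0 := by simpa using congrArg (i ∈ ·) hxy
    simp only [apexGrid_edgeDist_spoke_inr, this]

theorem apexGrid_mem_or_mem_of_isEdgeResolvingSet {S : Set (ApexGridVertex k)}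
    (hS : IsEdgeResolvingSet (apexGrid k) S) {x y : Fin k → Fin 3} (hx : x ≠ gridCenter k)
    (hy : y ≠ gridCenter k) (hne : x ≠ y)
    (hxy : univ.filter (x · = 0) = univ.filter (y · = 0)) :
    .inl x ∈ S ∨ .inl y ∈ S := by
  obtain ⟨w, hwS, hw⟩ := hS _ ((mem_edgeSet _).2 (apexGrid_adj_gridCenter hx))
    _ ((mem_edgeSet _).2 (apexGrid_adj_gridCenter hy))
    (Sym2.congr_left.not.2 (Sum.inl_injective.ne hne))
  by_contra! h
  exact hw (apexGrid_edgeDist_spoke_eq hxy (ne_of_mem_of_not_mem hwS h.1)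
    (ne_of_mem_of_not_mem hwS h.2))

theorem apexGrid_le_edgeMetricDim : 3 ^ k - 1 - 2 ^ k ≤ edgeMetricDim (apexGrid k) := by
  classical
  refine le_edgeMetricDim (S₀ := univ) (by simpa using apexGrid_connected.isEdgeResolvingSet_univ)
    fun S hS => ?_
  let A := univ.erase (gridCenter k)
  have hA : A.card = 3 ^ k - 1 := by simp [A]
  have hpigeon := A.card_le_card_filter_add_card (fun x => univ.filter (x · = 0))
    (fun x => Sum.inl x ∈ S) fun x hx y hy =>
      apexGrid_mem_or_mem_of_isEdgeResolvingSet hS (ne_of_mem_erase hx) (ne_of_mem_erase hy)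
  have hS' : (A.filter fun x => Sum.inl x ∈ S).card ≤ S.card :=
    card_le_card_of_injOn Sum.inl (fun _ hx => (mem_filter.1 hx).2) Sum.inl_injective.injOn
  simp only [Fintype.card_finset, Fintype.card_fin] at hpigeon
  omega

end ApexGrid

theorem statement16_general (k : ℕ) :
    ∃ (V : Type) (_ : Fintype V) (G : SimpleGraph V), G.Connected ∧
      metricDim G = k ∧ Fintype.card V = 3 ^ k + k ∧
      3 ^ k - 1 - 2 ^ k ≤ edgeMetricDim G :=
  ⟨ApexGridVertex k, inferInstance, apexGrid k, apexGrid_connected, apexGrid_metricDim, by simp,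
    apexGrid_le_edgeMetricDim⟩

/-- for every `k ≥ 1` there is a finite connected graph with metric
dimension exactly `k`, order `3^k + k`, and edge metric dimension at least
`3^k - 1 - 2^k`. -/
theorem statement16 (k : ℕ) (hk : 1 ≤ k) :
    ∃ (V : Type) (_ : Fintype V) (G : SimpleGraph V), G.Connected ∧
      metricDim G = k ∧ Fintype.card V = 3 ^ k + k ∧
      3 ^ k - 1 - 2 ^ k ≤ edgeMetricDim G :=
  statement16_general k
end

section
/- For all integers d ≥ 1 and n ≥ 2 with n ≥ d^{d−1}, the metric dimension of the d-dimensional grid P_n^d equals d. -/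
open SimpleGraph

/-- The `d`-dimensional grid `P_n^d` on vertex set `{0,...,n-1}^d`: two vertices are
adjacent iff they agree in all but one coordinate, in which they differ by exactly 1. -/
def gridGraph (n d : ℕ) : SimpleGraph (Fin d → Fin n) where
  Adj x y := ∃ i, ((x i : ℕ) + 1 = (y i : ℕ) ∨ (y i : ℕ) + 1 = (x i : ℕ)) ∧
    ∀ j, j ≠ i → x j = y j
  symm := by
    refine ⟨?_⟩
    rintro x y ⟨i, hi, hj⟩
    exact ⟨i, hi.symm, fun j h => (hj j h).symm⟩
  loopless := by
    refine ⟨?_⟩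
    rintro x ⟨i, hi, _⟩
    rcases hi with h | h <;> omega

/-!
Distances in `P_n^d` are ℓ¹ distances. The origin together with the corners `(n-1)·e_j`,
`j ≠ 0`, is a resolving set of size `d`: the distance to the origin is the coordinate sum
`Σ u_i`, and the distance to `(n-1)·e_j` is `Σ u_i + (n-1) - 2 u_j`, so every `u_j` can be
read off.

Conversely all distances are at most `D = d(n-1)`, so a resolving set of size `k` embeds the
`n^d` vertices into `{0, …, D}^k`. If `k ≤ d - 1` this gives
`n^d ≤ (D + 1)^(d-1) < (dn)^(d-1) ≤ n^d`, the last step being where `d^(d-1) ≤ n` enters.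
-/

theorem Fintype.sum_add_eq_sum_add_of_eq_of_ne {ι M : Type*} [Fintype ι] [AddCommMonoid M]
    {f g : ι → M} (i : ι) (h : ∀ j, j ≠ i → f j = g j) :
    ∑ j, f j + g i = ∑ j, g j + f i := by
  classical
  rw [← Finset.add_sum_erase _ f (Finset.mem_univ i),
    ← Finset.add_sum_erase _ g (Finset.mem_univ i),
    Finset.sum_congr rfl fun j hj => h j (Finset.ne_of_mem_erase hj)]
  abel

namespace SimpleGraph

variable {V : Type*} {G : SimpleGraph V}

theorem Walk.le_add_length_of_forall_adj (ρ : V → ℕ)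
    (hρ : ∀ u w, G.Adj u w → ρ u ≤ ρ w + 1) {u v : V} (p : G.Walk u v) :
    ρ u ≤ ρ v + p.length := by
  induction p with
  | nil => simp
  | cons h _ ih => have := hρ _ _ h; simp only [Walk.length_cons]; omega

theorem exists_walk_length_le_of_forall_exists_adj {v : V} (ρ : V → ℕ)
    (hρ : ∀ u, u ≠ v → ∃ w, G.Adj u w ∧ ρ w + 1 = ρ u) (u : V) :
    ∃ p : G.Walk u v, p.length ≤ ρ u := by
  induction hk : ρ u using Nat.strong_induction_on generalizing u with
  | _ k ih =>
    by_cases huv : u = v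
    · subst huv; exact ⟨Walk.nil, Nat.zero_le _⟩
    obtain ⟨w, hadj, hw⟩ := hρ u huv
    obtain ⟨p, hp⟩ := ih (ρ w) (by omega) w rfl
    exact ⟨Walk.cons hadj p, by simp only [Walk.length_cons]; omega⟩

theorem dist_eq_of_forall_adj {v : V} (ρ : V → ℕ) (hv : ρ v = 0)
    (hle : ∀ u w, G.Adj u w → ρ u ≤ ρ w + 1)
    (hstep : ∀ u, u ≠ v → ∃ w, G.Adj u w ∧ ρ w + 1 = ρ u) (u : V) :
    G.dist u v = ρ u := by
  obtain ⟨p, hp⟩ := exists_walk_length_le_of_forall_exists_adj ρ hstep u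
  obtain ⟨q, hq⟩ := (Walk.reachable p).exists_walk_length_eq_dist
  have := q.le_add_length_of_forall_adj ρ hle
  have := dist_le p
  omega

end SimpleGraph

theorem IsResolvingSet.card_le_pow {V : Type*} [Fintype V] {G : SimpleGraph V} {S : Finset V}
    (hS : IsResolvingSet G S) {D : ℕ} (hD : ∀ u v, G.dist u v ≤ D) :
    Fintype.card V ≤ (D + 1) ^ S.card := by
  classical
  let φ : V → S → Fin (D + 1) := fun u w => ⟨G.dist u w, Nat.lt_succ_of_le (hD u w)⟩
  have hφ : Function.Injective φ := by
    intro u v huv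
    by_contra hne
    obtain ⟨w, hw, hd⟩ := hS u v hne
    exact hd (congrArg Fin.val (congrFun huv ⟨w, hw⟩))
  simpa using Fintype.card_le_of_injective φ hφ

theorem metricDim_le_card {V : Type*} {G : SimpleGraph V} {S : Finset V}
    (hS : IsResolvingSet G S) : metricDim G ≤ S.card :=
  Nat.sInf_le ⟨S, hS, rfl⟩

theorem exists_isResolvingSet_card_eq_metricDim {V : Type*} {G : SimpleGraph V}
    (h : ∃ S : Finset V, IsResolvingSet G S) :
    ∃ S : Finset V, IsResolvingSet G S ∧ S.card = metricDim G :=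
  let ⟨S, hS⟩ := h
  Nat.sInf_mem (s := {k | ∃ S : Finset V, IsResolvingSet G S ∧ S.card = k})
    ⟨S.card, S, hS, rfl⟩

namespace GridGraph

variable {n d : ℕ}

def l1Dist (u v : Fin d → Fin n) : ℕ := ∑ i, ((u i : ℤ) - v i).natAbs

theorem l1Dist_le_add_one_of_adj {u w : Fin d → Fin n} (v : Fin d → Fin n)
    (h : (gridGraph n d).Adj u w) : l1Dist u v ≤ l1Dist w v + 1 := by
  obtain ⟨i, hi, hrest⟩ := h
  have := Fintype.sum_add_eq_sum_add_of_eq_of_ne (f := fun j => ((u j : ℤ) - v j).natAbs)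
    (g := fun j => ((w j : ℤ) - v j).natAbs) i (fun j hj => by rw [hrest j hj])
  unfold l1Dist
  omega

theorem exists_adj_l1Dist_add_one {u v : Fin d → Fin n} (huv : u ≠ v) :
    ∃ w, (gridGraph n d).Adj u w ∧ l1Dist w v + 1 = l1Dist u v := by
  classical
  obtain ⟨i, hi⟩ := Function.ne_iff.1 huv
  obtain ⟨c, hc, hcv⟩ : ∃ c : Fin n, ((u i : ℕ) + 1 = c ∨ (c : ℕ) + 1 = u i) ∧
      ((c : ℤ) - v i).natAbs + 1 = ((u i : ℤ) - v i).natAbs := by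
    rcases Fin.lt_or_lt_of_ne hi with hlt | hgt
    · exact ⟨⟨u i + 1, by omega⟩, Or.inl rfl,
        by simp only [Nat.cast_add, Nat.cast_one]; omega⟩
    · exact ⟨⟨u i - 1, by omega⟩, Or.inr (by simp only; omega), by simp only; omega⟩
  refine ⟨Function.update u i c, ⟨i, by simpa using hc, fun j hj => by simp [hj]⟩, ?_⟩
  have := Fintype.sum_add_eq_sum_add_of_eq_of_ne
    (f := fun j => ((Function.update u i c j : ℤ) - v j).natAbs)
    (g := fun j => ((u j : ℤ) - v j).natAbs) i (fun j hj => by simp [hj])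
  simp only [Function.update_self] at this
  unfold l1Dist
  omega

theorem dist_eq_l1Dist (u v : Fin d → Fin n) : (gridGraph n d).dist u v = l1Dist u v :=
  dist_eq_of_forall_adj (l1Dist · v) (by simp [l1Dist])
    (fun _ _ h => l1Dist_le_add_one_of_adj v h) (fun _ => exists_adj_l1Dist_add_one) u

theorem l1Dist_le (u v : Fin d → Fin n) : l1Dist u v ≤ d * (n - 1) :=
  calc l1Dist u v ≤ ∑ _i : Fin d, (n - 1) := Finset.sum_le_sum fun i _ => by omega
    _ = d * (n - 1) := by simp

theorem le_card_of_isResolvingSet (hd : 1 ≤ d) (hn : 2 ≤ n) (h : d ^ (d - 1) ≤ n)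
    {S : Finset (Fin d → Fin n)} (hS : IsResolvingSet (gridGraph n d) S) : d ≤ S.card := by
  by_contra! hlt
  have hcard : n ^ d ≤ (d * (n - 1) + 1) ^ (d - 1) := calc
    n ^ d = Fintype.card (Fin d → Fin n) := by simp
    _ ≤ (d * (n - 1) + 1) ^ S.card :=
      hS.card_le_pow fun u v => (dist_eq_l1Dist u v).trans_le (l1Dist_le u v)
    _ ≤ (d * (n - 1) + 1) ^ (d - 1) := Nat.pow_le_pow_right (by omega) (by omega)
  obtain rfl | hd2 := hd.eq_or_lt
  · simp only [pow_one, tsub_self, pow_zero] at hcard; omega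
  have : (d * (n - 1) + 1) ^ (d - 1) < n ^ d := calc
    (d * (n - 1) + 1) ^ (d - 1) < (d * n) ^ (d - 1) := by
      gcongr
      · omega
      · have := Nat.le_mul_of_pos_right d (by omega : 0 < n)
        rw [Nat.mul_sub_one]; omega
    _ = d ^ (d - 1) * n ^ (d - 1) := mul_pow _ _ _
    _ ≤ n * n ^ (d - 1) := Nat.mul_le_mul_right _ h
    _ = n ^ d := by rw [← pow_succ']; congr 1; omega
  omega

variable {m k : ℕ}

theorem l1Dist_zero (u : Fin k → Fin (m + 1)) : l1Dist u 0 = ∑ i, (u i : ℕ) := by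
  simp [l1Dist]

theorem l1Dist_single_last_add (u : Fin k → Fin (m + 1)) (i : Fin k) :
    l1Dist u (Pi.single i (Fin.last m)) + 2 * u i = l1Dist u 0 + m := by
  have := Fintype.sum_add_eq_sum_add_of_eq_of_ne
    (f := fun j => ((u j : ℤ) - (Pi.single i (Fin.last m) : Fin k → Fin (m + 1)) j).natAbs)
    (g := fun j => ((u j : ℤ) - (0 : Fin k → Fin (m + 1)) j).natAbs) i
    (fun j hj => by simp [hj])
  change l1Dist u _ + _ = l1Dist u 0 + _ at this
  simp only [Pi.single_eq_same, Fin.val_last, Pi.zero_apply, Fin.val_zero] at this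
  omega

def landmark (m k : ℕ) : Option (Fin k) → Fin (k + 1) → Fin (m + 1)
  | none => 0
  | some j => Pi.single j.succ (Fin.last m)

theorem isResolvingSet_image_landmark :
    IsResolvingSet (gridGraph (m + 1) (k + 1)) ↑(Finset.univ.image (landmark m k)) := by
  intro u v huv
  by_contra! h
  have hdist (x : Option (Fin k)) : l1Dist u (landmark m k x) = l1Dist v (landmark m k x) := by
    simpa [dist_eq_l1Dist] using h _ (by simp)
  have hsum := hdist none
  have htail (j : Fin k) : u j.succ = v j.succ := by
    have := hdist (some j)
    have := l1Dist_single_last_add u j.succ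
    have := l1Dist_single_last_add v j.succ
    simp only [landmark] at *
    omega
  refine huv (funext fun i => Fin.cases ?_ htail i)
  simp only [landmark, l1Dist_zero, Fin.sum_univ_succ, htail] at hsum
  omega

theorem metricDim_le (m k : ℕ) : metricDim (gridGraph (m + 1) (k + 1)) ≤ k + 1 := by
  calc metricDim (gridGraph (m + 1) (k + 1))
      ≤ (Finset.univ.image (landmark m k)).card := metricDim_le_card isResolvingSet_image_landmark
    _ ≤ k + 1 := Finset.card_image_le.trans (by simp)

end GridGraph

/-- for `d ≥ 1` and `n ≥ 2` with `n ≥ d^(d-1)`, the metric dimension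
of the grid `P_n^d` equals `d`. -/
theorem statement18 (d n : ℕ) (hd : 1 ≤ d) (hn : 2 ≤ n) (h : d ^ (d - 1) ≤ n) :
    metricDim (gridGraph n d) = d := by
  obtain ⟨k, rfl⟩ : ∃ k, d = k + 1 := ⟨d - 1, by omega⟩
  obtain ⟨m, rfl⟩ : ∃ m, n = m + 1 := ⟨n - 1, by omega⟩
  obtain ⟨S, hS, hcard⟩ :=
    exists_isResolvingSet_card_eq_metricDim ⟨_, GridGraph.isResolvingSet_image_landmark⟩
  exact (GridGraph.metricDim_le m k).antisymm
    (hcard ▸ GridGraph.le_card_of_isResolvingSet hd hn h hS)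
end
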